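/- Let μ > 0, R > 0, β > 0 and let σ_S(r) = [β/(β+RP₀(R))]·(R/r)^{1/2}·I_{1/2}(r)/I_{1/2}(R) solve Δσ_S = σ_S radially. Define λ = σ_S''(R) + β·σ_S'(R) and φ(r) = −μ·σ_S'(r) + (μλ/(1+βR))·r. Then φ satisfies −φ'' − (2/r)φ' + (2/r²)φ = μ·σ_S'(r) on (0,R) and φ'(R) + β·φ(R) = 0. -/

import Mathlib

/-- `sbI k x = I_{k - 1/2}(x)`, the modified Bessel function of the first kind of
half-integer order, defined from the elementary closed forms
`I_{-1/2}(x) = √(2/(πx)) cosh x`, `I_{1/2}(x) = √(2/(πx)) sinh x` and the recurrence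
`I_{ν+1}(x) = I_{ν-1}(x) - (2ν/x) I_ν(x)`. -/
noncomputable def sbI : ℕ → ℝ → ℝ
  | 0, x => Real.sqrt (2 / (Real.pi * x)) * Real.cosh x
  | 1, x => Real.sqrt (2 / (Real.pi * x)) * Real.sinh x
  | (k + 2), x => sbI k x - ((2 * (k : ℝ) + 1) / x) * sbI (k + 1) x

/-- `besselIhalf n x = I_{n+1/2}(x)`. -/
noncomputable def besselIhalf (n : ℕ) (x : ℝ) : ℝ := sbI (n + 1) x

/-- `P n ξ = I_{n+3/2}(ξ) / (ξ · I_{n+1/2}(ξ))`. -/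
noncomputable def P (n : ℕ) (ξ : ℝ) : ℝ := besselIhalf (n + 1) ξ / (ξ * besselIhalf n ξ)


/-- The radially symmetric stationary nutrient concentration
`σ_S(r) = [β/(β+R·P₀(R))]·(R/r)^{1/2}·I_{1/2}(r)/I_{1/2}(R)`. -/
noncomputable def sigS (R β : ℝ) (r : ℝ) : ℝ :=
  β / (β + R * P 0 R) * (Real.sqrt R / Real.sqrt r) * (besselIhalf 0 r / besselIhalf 0 R)

/-- `λ = σ_S''(R) + β·σ_S'(R)`. -/
noncomputable def lam (R β : ℝ) : ℝ :=
  deriv (deriv (sigS R β)) R + β * deriv (sigS R β) R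

/-- `φ(r) = −μ·σ_S'(r) + (μλ/(1+βR))·r`. -/
noncomputable def phiF (μ R β : ℝ) (r : ℝ) : ℝ :=
  -μ * deriv (sigS R β) r + μ * lam R β / (1 + β * R) * r

/-!
On `(0, ∞)` the concentration `σ_S` is a multiple of `sinh r / r`, so it solves the radial
equation `σ'' + (2/r) σ' = σ`. Differentiating that equation gives
`σ''' + (2/r) σ'' - (2/r²) σ' = σ'`, which is the differential equation for `φ = -μ σ' + c r`
because the operator `-φ'' - (2/r) φ' + (2/r²) φ` annihilates the linear term `c r`.
The Robin condition reduces to `φ'(R) + β φ(R) = -μ λ + c (1 + β R)`, and the constant `c`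
in `φ` is chosen to make this vanish.
-/

open Real Set Filter Topology

/-- Solutions of `Δσ = σ` for radial `σ` in `ℝ³`, as functions of the radius `r > 0`. -/
def RadialModHelmholtz (σ : ℝ → ℝ) : Prop :=
  ∀ r > 0, DifferentiableAt ℝ σ r ∧ DifferentiableAt ℝ (deriv σ) r ∧
    deriv (deriv σ) r + 2 / r * deriv σ r = σ r

namespace RadialModHelmholtz

variable {σ : ℝ → ℝ}

theorem congr {τ : ℝ → ℝ} (hτ : RadialModHelmholtz τ) (h : EqOn σ τ (Ioi 0)) :
    RadialModHelmholtz σ := by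
  have hd : EqOn (deriv σ) (deriv τ) (Ioi 0) := fun x hx =>
    (h.eventuallyEq_of_mem (Ioi_mem_nhds hx)).deriv_eq
  intro r hr
  have hστ : σ =ᶠ[𝓝 r] τ := h.eventuallyEq_of_mem (Ioi_mem_nhds hr)
  have hd' : deriv σ =ᶠ[𝓝 r] deriv τ := hd.eventuallyEq_of_mem (Ioi_mem_nhds hr)
  obtain ⟨h₁, h₂, hode⟩ := hτ r hr
  refine ⟨h₁.congr_of_eventuallyEq hστ, h₂.congr_of_eventuallyEq hd', ?_⟩
  rw [hd'.deriv_eq, hd hr, h hr, hode]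

theorem const_mul (hσ : RadialModHelmholtz σ) (K : ℝ) :
    RadialModHelmholtz fun r => K * σ r := by
  intro r hr
  obtain ⟨h₁, h₂, hode⟩ := hσ r hr
  simp only [deriv_const_mul_field']
  refine ⟨h₁.const_mul K, h₂.const_mul K, ?_⟩
  rw [← hode]
  ring

theorem hasDerivAt_deriv_deriv (hσ : RadialModHelmholtz σ) {r : ℝ} (hr : 0 < r) :
    HasDerivAt (deriv (deriv σ))
      (deriv σ r + 2 / r ^ 2 * deriv σ r - 2 / r * deriv (deriv σ) r) r := by
  have hode : deriv (deriv σ) =ᶠ[𝓝 r] fun x => σ x - 2 / x * deriv σ x := by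
    filter_upwards [Ioi_mem_nhds hr] with x hx
    rw [← (hσ x hx).2.2]
    ring
  obtain ⟨h₁, h₂, -⟩ := hσ r hr
  have h := h₁.hasDerivAt.sub
    (((hasDerivAt_const r 2).div (hasDerivAt_id' r) hr.ne').mul h₂.hasDerivAt)
  refine (h.congr_deriv ?_).congr_of_eventuallyEq hode
  simp only [Pi.div_apply]
  field_simp
  ring

end RadialModHelmholtz

theorem radialModHelmholtz_sinh_div : RadialModHelmholtz fun r => sinh r / r := by
  have hd : ∀ x ≠ 0, HasDerivAt (fun r => sinh r / r) (cosh x / x - sinh x / x ^ 2) x := by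
    intro x hx
    refine ((hasDerivAt_sinh x).div (hasDerivAt_id' x) hx).congr_deriv ?_
    field_simp
  have hd' : ∀ x ≠ 0, HasDerivAt (fun r => cosh r / r - sinh r / r ^ 2)
      (sinh x / x - 2 * cosh x / x ^ 2 + 2 * sinh x / x ^ 3) x := by
    intro x hx
    refine (((hasDerivAt_cosh x).div (hasDerivAt_id' x) hx).sub
      ((hasDerivAt_sinh x).div (hasDerivAt_pow 2 x) (pow_ne_zero 2 hx))).congr_deriv ?_
    field_simp
    ring
  intro r hr
  have hev : deriv (fun r => sinh r / r) =ᶠ[𝓝 r] fun x => cosh x / x - sinh x / x ^ 2 := by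
    filter_upwards [Ioi_mem_nhds hr] with x hx using (hd x (ne_of_gt hx)).deriv
  refine ⟨(hd r hr.ne').differentiableAt, ?_, ?_⟩
  · exact (hd' r hr.ne').differentiableAt.congr_of_eventuallyEq hev
  · rw [hev.deriv_eq, (hd' r hr.ne').deriv, (hd r hr.ne').deriv]
    field_simp
    ring

theorem besselIhalf_zero_eq (r : ℝ) :
    besselIhalf 0 r = √(2 / π) / √r * sinh r := by
  rw [besselIhalf, sbI, ← div_div, sqrt_div (by positivity)]

theorem sigS_eqOn (R β : ℝ) :
    EqOn (sigS R β)
      (fun r => β / (β + R * P 0 R) * √R * √(2 / π) / besselIhalf 0 R * (sinh r / r)) (Ioi 0) := by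
  intro r (hr : 0 < r)
  have : √r ≠ 0 := by positivity
  simp only [sigS, besselIhalf_zero_eq]
  field_simp
  rw [sq_sqrt hr.le]

theorem radialModHelmholtz_sigS (R β : ℝ) : RadialModHelmholtz (sigS R β) :=
  (radialModHelmholtz_sinh_div.const_mul _).congr (sigS_eqOn R β)

section LinearCorrection

variable {σ φ : ℝ → ℝ} {μ c : ℝ}

theorem hasDerivAt_neg_mul_deriv_add_mul (hφ : φ = fun r => -μ * deriv σ r + c * r) {x : ℝ}
    (h : DifferentiableAt ℝ (deriv σ) x) : HasDerivAt φ (-μ * deriv (deriv σ) x + c) x := by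
  subst hφ
  exact ((h.hasDerivAt.const_mul (-μ)).add ((hasDerivAt_id' x).const_mul c)).congr_deriv
    (by rw [mul_one])

theorem RadialModHelmholtz.radial_eq_of_neg_mul_deriv_add_mul (hσ : RadialModHelmholtz σ)
    (hφ : φ = fun r => -μ * deriv σ r + c * r) {r : ℝ} (hr : 0 < r) :
    -deriv (deriv φ) r - 2 / r * deriv φ r + 2 / r ^ 2 * φ r = μ * deriv σ r := by
  have hφ' : deriv φ =ᶠ[𝓝 r] fun x => -μ * deriv (deriv σ) x + c := by
    filter_upwards [Ioi_mem_nhds hr] with x hx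
    exact (hasDerivAt_neg_mul_deriv_add_mul hφ (hσ x hx).2.1).deriv
  have hφ'' : deriv (deriv φ) r =
      -μ * (deriv σ r + 2 / r ^ 2 * deriv σ r - 2 / r * deriv (deriv σ) r) := by
    rw [hφ'.deriv_eq]
    exact (((hσ.hasDerivAt_deriv_deriv hr).const_mul (-μ)).add_const c).deriv
  rw [hφ'', hφ'.eq_of_nhds, hφ]
  field_simp
  ring

theorem deriv_add_mul_of_neg_mul_deriv_add_mul (hφ : φ = fun r => -μ * deriv σ r + c * r)
    {R : ℝ} (h : DifferentiableAt ℝ (deriv σ) R) (β : ℝ) :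
    deriv φ R + β * φ R = -μ * (deriv (deriv σ) R + β * deriv σ R) + c * (1 + β * R) := by
  rw [(hasDerivAt_neg_mul_deriv_add_mul hφ h).deriv, hφ]
  ring

end LinearCorrection

theorem stmt16_general (μ R β : ℝ) (hR : 0 < R) (hβ : 0 < β) :
    (∀ r ∈ Set.Ioo (0 : ℝ) R,
      -(deriv (deriv (phiF μ R β)) r) - (2 / r) * deriv (phiF μ R β) r
          + (2 / r ^ 2) * phiF μ R β r = μ * deriv (sigS R β) r) ∧
    deriv (phiF μ R β) R + β * phiF μ R β R = 0 := by
  have hσ := radialModHelmholtz_sigS R β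
  have hφ : phiF μ R β =
      fun r => -μ * deriv (sigS R β) r + μ * lam R β / (1 + β * R) * r := rfl
  refine ⟨fun r hr => hσ.radial_eq_of_neg_mul_deriv_add_mul hφ hr.1, ?_⟩
  rw [deriv_add_mul_of_neg_mul_deriv_add_mul hφ (hσ R hR).2.1, ← lam]
  field_simp
  ring

/-- `φ` satisfies `−φ'' − (2/r)φ' + (2/r²)φ = μ·σ_S'` on `(0,R)` and
the Robin boundary condition `φ'(R) + β·φ(R) = 0`. -/
theorem stmt16 (μ R β : ℝ) (hμ : 0 < μ) (hR : 0 < R) (hβ : 0 < β) :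
    (∀ r ∈ Set.Ioo (0 : ℝ) R,
      -(deriv (deriv (phiF μ R β)) r) - (2 / r) * deriv (phiF μ R β) r
          + (2 / r ^ 2) * phiF μ R β r = μ * deriv (sigS R β) r) ∧
    deriv (phiF μ R β) R + β * phiF μ R β R = 0 :=
  stmt16_general μ R β hR hβ
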